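/- arXiv:math-ph/0309004 — 3 statements merged into one kernel-verified Lean document; each statement's English description precedes it below -/
import Mathlib

section
/- Let b ≠ 0, ω irrational, φ real, and let (x_n) be a solution of the Almost Mathieu eigenvalue equation x_{n+1} + x_{n-1} + b·cos(2πωn + φ)·x_n = a·x_n which is quasi-periodic with frequency ω, i.e. x_n = ψ(2πωn + φ) for a continuous function ψ on the circle with Fourier coefficients (ψ_m). Then the Fourier coefficients satisfy the dual Almost Mathieu equation ψ_{m+1} + ψ_{m-1} + (4/b)·cos(2πωm)·ψ_m = (2a/b)·ψ_m for all m ∈ ℤ. -/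
instance : Fact (0 < 2 * Real.pi) := ⟨by positivity⟩

/-!
Since `ω` is irrational, the orbit `2πωn + φ` is dense in the circle, so by continuity of `ψ`
the eigenvalue equation for `x` becomes the functional equation
`ψ(θ + 2πω) + ψ(θ - 2πω) + b cos θ ψ(θ) = a ψ(θ)` for every `θ`. On Fourier coefficients,
translation by `2πω` multiplies `ψ_m` by `e^{2πiωm}`, and multiplication by
`cos θ = (e^{iθ} + e^{-iθ}) / 2` averages `ψ_{m-1}` and `ψ_{m+1}`; dividing by `b / 2`
gives the dual equation.
-/

open MeasureTheory AddCircle Real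

namespace AddCircle

variable {T : ℝ}

theorem denseRange_mul_add_coe {α : ℝ} (φ : ℝ) (h : Irrational (α / T)) :
    DenseRange fun n : ℤ => ((α * n + φ : ℝ) : AddCircle T) := by
  have hrot : DenseRange (· • (α : AddCircle T) : ℤ → AddCircle T) :=
    denseRange_zsmul_coe_iff.2 h
  convert (Homeomorph.addRight (φ : AddCircle T)).surjective.denseRange.comp hrot
    (continuous_add_const _) using 1
  funext n
  simp [← coe_zsmul, zsmul_eq_mul, mul_comm]

theorem hull_equation_of_quasiPeriodic_solution {α φ a : ℝ} {V ψ : AddCircle T → ℝ}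
    (hV : Continuous V) (hψ : Continuous ψ)
    (hdense : DenseRange fun n : ℤ => ((α * n + φ : ℝ) : AddCircle T)) {x : ℤ → ℝ}
    (hqp : ∀ n : ℤ, x n = ψ ((α * n + φ : ℝ)))
    (hsol : ∀ n : ℤ, x (n + 1) + x (n - 1) + V ((α * n + φ : ℝ)) * x n = a * x n)
    (θ : AddCircle T) :
    ψ (θ + α) + ψ (θ - α) + V θ * ψ θ = a * ψ θ := by
  refine congrFun (hdense.equalizer (g := fun θ => ψ (θ + α) + ψ (θ - α) + V θ * ψ θ)
    (h := fun θ => a * ψ θ) (by fun_prop) (by fun_prop) (funext fun n => ?_)) θ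
  have hnext :
      ((α * n + φ : ℝ) : AddCircle T) + α = ((α * (n + 1 : ℤ) + φ : ℝ) : AddCircle T) := by
    rw [← coe_add]; congr 1; push_cast; ring
  have hprev :
      ((α * n + φ : ℝ) : AddCircle T) - α = ((α * (n - 1 : ℤ) + φ : ℝ) : AddCircle T) := by
    rw [← coe_sub]; congr 1; push_cast; ring
  simp only [Function.comp_apply, hnext, hprev, ← hqp]
  exact hsol n

end AddCircle

theorem fourier_coe_add_fourier_neg_coe {T : ℝ} (n : ℤ) (x : ℝ) :
    fourier n (x : AddCircle T) + fourier (-n) (x : AddCircle T)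
      = 2 * (Real.cos (2 * π * n * x / T) : ℂ) := by
  rw [fourier_coe_apply, fourier_coe_apply, Complex.ofReal_cos, Complex.cos]
  push_cast
  ring_nf

theorem Real.Angle.ofReal_cos_eq_fourier (θ : AddCircle (2 * π)) :
    (Real.Angle.cos θ : ℂ) = (fourier 1 θ + fourier (-1) θ) / 2 := by
  induction θ using QuotientAddGroup.induction_on with
  | H x =>
    have hcos : Real.Angle.cos (x : AddCircle (2 * π)) = Real.cos x := Real.Angle.cos_coe x
    rw [fourier_coe_add_fourier_neg_coe, Int.cast_one, mul_one,
      mul_div_cancel_left₀ _ two_pi_pos.ne', hcos]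
    ring

section fourierCoeff

variable {T : ℝ} [Fact (0 < T)]

section normedSpace

variable {E : Type*} [NormedAddCommGroup E] [NormedSpace ℂ E]

theorem fourierCoeff_add_apply {f g : AddCircle T → E} (hf : Integrable f haarAddCircle)
    (hg : Integrable g haarAddCircle) (n : ℤ) :
    fourierCoeff (fun t => f t + g t) n = fourierCoeff f n + fourierCoeff g n :=
  congrFun (fourierCoeff.add hf hg) n

theorem fourierCoeff_comp_add_right (f : AddCircle T → E) (c : AddCircle T) (n : ℤ) :
    fourierCoeff (fun t => f (t + c)) n = fourier n c • fourierCoeff f n := by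
  rw [fourierCoeff, fourierCoeff, ← integral_sub_right_eq_self _ c, ← integral_smul]
  congr 1 with t
  rw [sub_add_cancel, smul_smul, fourier_apply, fourier_apply, fourier_apply, sub_eq_add_neg,
    smul_add, neg_smul_neg, toCircle_add, Circle.coe_mul, mul_comm]

theorem fourierCoeff_fourier_smul (f : AddCircle T → E) (k n : ℤ) :
    fourierCoeff (fun t => fourier k t • f t) n = fourierCoeff f (n - k) := by
  simp only [fourierCoeff, smul_smul, ← fourier_add]
  congr 2 with t
  ring_nf

end normedSpace

theorem fourierCoeff_dual_equation_of_hull_equation {F : AddCircle T → ℂ}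
    (hF : Integrable F haarAddCircle) {α : AddCircle T} {β μ : ℂ}
    (h : ∀ θ, F (θ + α) + F (θ - α) + β * (fourier 1 θ + fourier (-1) θ) * F θ = μ * F θ)
    (m : ℤ) :
    (fourier m α + fourier (-m) α) * fourierCoeff F m
      + β * (fourierCoeff F (m - 1) + fourierCoeff F (m + 1)) = μ * fourierCoeff F m := by
  have hplus := hF.fourier_smul 1
  have hminus := hF.fourier_smul (-1)
  have hcos := (hplus.fun_add hminus).const_mul β
  have hback := hF.comp_add_right (-α)
  have key : fourierCoeff (fun θ => F (θ + α) + (F (θ + -α)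
      + β * (fourier 1 θ • F θ + fourier (-1) θ • F θ))) m
      = fourierCoeff (fun θ => μ * F θ) m := by
    congr 1 with θ
    rw [← h θ, sub_eq_add_neg, smul_eq_mul, smul_eq_mul]
    ring
  rw [fourierCoeff_add_apply (hF.comp_add_right α) (hback.fun_add hcos),
    fourierCoeff_add_apply hback hcos, fourierCoeff.const_mul,
    fourierCoeff_add_apply hplus hminus, fourierCoeff_fourier_smul, fourierCoeff_fourier_smul,
    fourierCoeff_comp_add_right, fourierCoeff_comp_add_right, fourierCoeff.const_mul,
    sub_neg_eq_add] at key
  rw [← key]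
  simp only [fourier_apply, smul_neg, neg_smul, smul_eq_mul]
  ring

end fourierCoeff

/-- If a quasi-periodic (frequency ω) solution of the Almost Mathieu
equation is given by a continuous function ψ on the circle ℝ/2πℤ, then the Fourier
coefficients of ψ satisfy the dual Almost Mathieu equation. -/
theorem fourier_coeffs_satisfy_dual_almost_mathieu
    (a b ω φ : ℝ) (hb : b ≠ 0) (hω : Irrational ω)
    (x : ℤ → ℝ) (ψ : AddCircle (2 * Real.pi) → ℝ) (hψ : Continuous ψ)
    (hsol : ∀ n : ℤ, x (n + 1) + x (n - 1)
      + b * Real.cos (2 * Real.pi * ω * n + φ) * x n = a * x n)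
    (hqp : ∀ n : ℤ, x n = ψ ((2 * Real.pi * ω * n + φ : ℝ)))
    (c : ℤ → ℂ) (hc : ∀ m : ℤ, c m = fourierCoeff (fun θ => (ψ θ : ℂ)) m) :
    ∀ m : ℤ, c (m + 1) + c (m - 1)
      + ((4 / b : ℝ) : ℂ) * (Real.cos (2 * Real.pi * ω * m) : ℂ) * c m
      = ((2 * a / b : ℝ) : ℂ) * c m := by
  intro m
  have hdense : DenseRange fun n : ℤ => ((2 * π * ω * n + φ : ℝ) : AddCircle (2 * π)) :=
    denseRange_mul_add_coe φ (by rwa [mul_div_cancel_left₀ _ two_pi_pos.ne'])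
  have hhull := hull_equation_of_quasiPeriodic_solution (V := fun θ => b * Real.Angle.cos θ)
    (continuous_const.mul Real.Angle.continuous_cos) hψ hdense hqp hsol
  have hint : Integrable (fun θ => (ψ θ : ℂ)) haarAddCircle :=
    (Complex.continuous_ofReal.comp hψ).integrable_of_hasCompactSupport
      (HasCompactSupport.of_compactSpace _)
  have hdual := fourierCoeff_dual_equation_of_hull_equation hint (β := b / 2) (μ := a)
    (fun θ => by
      have hhullC := congrArg Complex.ofReal (hhull θ)
      push_cast [Real.Angle.ofReal_cos_eq_fourier] at hhullC
      linear_combination hhullC) m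
  have hangle : 2 * π * m * (2 * π * ω) / (2 * π) = 2 * π * ω * m := by field_simp
  rw [fourier_coe_add_fourier_neg_coe, hangle, ← hc, ← hc, ← hc] at hdual
  have hbC : (b : ℂ) ≠ 0 := Complex.ofReal_ne_zero.mpr hb
  push_cast at hdual ⊢
  field_simp
  linear_combination 2 * hdual
end

section
/- Let ω be irrational and A : ℝ/2πℤ → SL(2,ℝ) continuous. Suppose there is a continuous map v : ℝ/2πℤ → ℝ² that never vanishes and satisfies v(θ + 2πω) = A(θ)·v(θ) for all θ. Then the continuous map Z(θ) = [[v₁(θ), −v₂(θ)/d(θ)], [v₂(θ), v₁(θ)/d(θ)]], where d = v₁² + v₂², takes values in SL(2,ℝ), and B¹(θ) := Z(θ + 2πω)⁻¹ A(θ) Z(θ) is upper triangular of the form [[1, b¹₁₂(θ)], [0, 1]] for a continuous function b¹₁₂ : ℝ/2πℤ → ℝ. -/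
/-- The triangularizing transformation built from an invariant section (v₁, v₂). -/
noncomputable def Zmat (v₁ v₂ : AddCircle (2 * Real.pi) → ℝ)
    (θ : AddCircle (2 * Real.pi)) : Matrix (Fin 2) (Fin 2) ℝ :=
  !![v₁ θ, -v₂ θ / (v₁ θ ^ 2 + v₂ θ ^ 2);
     v₂ θ, v₁ θ / (v₁ θ ^ 2 + v₂ θ ^ 2)]

/-!
`Z(θ)` has determinant one and sends `e₁` to `v(θ)`, so the invariance `A(θ) v(θ) = v(θ + 2πω)`
says exactly that `B(θ) = Z(θ + 2πω)⁻¹ A(θ) Z(θ)` fixes `e₁`. A determinant-one `2 × 2` matrix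
fixing `e₁` is unipotent upper triangular. The entry `b₁₂` is continuous because the inverse of
a determinant-one matrix is its adjugate, a polynomial in the entries.
-/

lemma sq_add_sq_ne_zero {R : Type*} [Field R] [LinearOrder R] [IsStrictOrderedRing R] {a b : R}
    (h : (a, b) ≠ (0, 0)) :
    a ^ 2 + b ^ 2 ≠ 0 := by
  rwa [sq, sq, Ne, mul_self_add_mul_self_eq_zero, ← Prod.mk.injEq]

namespace Matrix

variable {n R : Type*} [Fintype n] [DecidableEq n]

lemma mulVec_vec2 [CommRing R] (M : Matrix (Fin 2) (Fin 2) R) (a b : R) :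
    M *ᵥ ![a, b] = ![M 0 0 * a + M 0 1 * b, M 1 0 * a + M 1 1 * b] := by
  ext i
  fin_cases i <;> simp [mulVec, dotProduct, Fin.sum_univ_two]

lemma inv_mul_mul_mulVec_eq_self [CommRing R] {A X Y : Matrix n n R} (hY : IsUnit Y.det)
    {x : n → R} (h : A *ᵥ (X *ᵥ x) = Y *ᵥ x) : (Y⁻¹ * A * X) *ᵥ x = x := by
  rw [← mulVec_mulVec, ← mulVec_mulVec, h, mulVec_mulVec, nonsing_inv_mul _ hY, one_mulVec]

lemma det_inv_mul_mul_eq_one [CommRing R] {A X Y : Matrix n n R} (hA : A.det = 1)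
    (hX : X.det = 1) (hY : Y.det = 1) : (Y⁻¹ * A * X).det = 1 := by
  simp [det_mul, det_nonsing_inv, hA, hX, hY]

lemma eq_unipotent_of_det_eq_one_of_mulVec [CommRing R] {M : Matrix (Fin 2) (Fin 2) R}
    (hdet : M.det = 1) (hM : M *ᵥ ![1, 0] = ![1, 0]) : M = !![1, M 0 1; 0, 1] := by
  rw [mulVec_vec2] at hM
  have h00 : M 0 0 = 1 := by simpa using congrFun hM 0
  have h10 : M 1 0 = 0 := by simpa using congrFun hM 1
  rw [det_fin_two, h00, h10, one_mul, mul_zero, sub_zero] at hdet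
  ext i j
  fin_cases i <;> fin_cases j <;> simp [h00, h10, hdet]

lemma _root_.Continuous.matrix_inv_of_det_eq_one {X : Type*} [TopologicalSpace X] [CommRing R]
    [TopologicalSpace R] [IsTopologicalRing R] {f : X → Matrix n n R} (hf : Continuous f)
    (hdet : ∀ x, (f x).det = 1) : Continuous fun x => (f x)⁻¹ := by
  simp only [inv_def, hdet, Ring.inverse_one, one_smul]
  exact hf.matrix_adjugate

end Matrix

section Zmat

open Matrix

variable {v₁ v₂ : AddCircle (2 * Real.pi) → ℝ}

lemma det_Zmat {θ : AddCircle (2 * Real.pi)} (h : v₁ θ ^ 2 + v₂ θ ^ 2 ≠ 0) :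
    (Zmat v₁ v₂ θ).det = 1 := by
  rw [Zmat, det_fin_two_of]
  field_simp
  ring

lemma Zmat_mulVec_vec2_one_zero (θ : AddCircle (2 * Real.pi)) :
    Zmat v₁ v₂ θ *ᵥ ![1, 0] = ![v₁ θ, v₂ θ] := by
  rw [Zmat, mulVec_vec2]
  simp

lemma continuous_Zmat (hv₁ : Continuous v₁) (hv₂ : Continuous v₂)
    (hd : ∀ θ, v₁ θ ^ 2 + v₂ θ ^ 2 ≠ 0) : Continuous (Zmat v₁ v₂) := by
  refine continuous_matrix fun i j => ?_
  fin_cases i <;> fin_cases j <;>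
    simp only [Zmat, of_apply, cons_val', cons_val_zero, cons_val_one, cons_val_fin_one,
      Fin.isValue, Fin.zero_eta, Fin.mk_one] <;>
    fun_prop (disch := exact hd)

end Zmat

theorem invariant_section_triangularizes_general (ω : ℝ)
    (A : AddCircle (2 * Real.pi) → Matrix.SpecialLinearGroup (Fin 2) ℝ)
    (hA : Continuous fun θ => (A θ : Matrix (Fin 2) (Fin 2) ℝ))
    (v₁ v₂ : AddCircle (2 * Real.pi) → ℝ) (hv₁ : Continuous v₁) (hv₂ : Continuous v₂)
    (hnz : ∀ θ, (v₁ θ, v₂ θ) ≠ (0, 0))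
    (hsec : ∀ θ : AddCircle (2 * Real.pi),
      v₁ (θ + ((2 * Real.pi * ω : ℝ) : AddCircle (2 * Real.pi)))
          = (A θ : Matrix (Fin 2) (Fin 2) ℝ) 0 0 * v₁ θ
            + (A θ : Matrix (Fin 2) (Fin 2) ℝ) 0 1 * v₂ θ ∧
      v₂ (θ + ((2 * Real.pi * ω : ℝ) : AddCircle (2 * Real.pi)))
          = (A θ : Matrix (Fin 2) (Fin 2) ℝ) 1 0 * v₁ θ
            + (A θ : Matrix (Fin 2) (Fin 2) ℝ) 1 1 * v₂ θ) :
    (∀ θ, (Zmat v₁ v₂ θ).det = 1) ∧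
    ∃ b₁₂ : AddCircle (2 * Real.pi) → ℝ, Continuous b₁₂ ∧
      ∀ θ : AddCircle (2 * Real.pi),
        (Zmat v₁ v₂ (θ + ((2 * Real.pi * ω : ℝ) : AddCircle (2 * Real.pi))))⁻¹
            * (A θ : Matrix (Fin 2) (Fin 2) ℝ) * Zmat v₁ v₂ θ
          = !![1, b₁₂ θ; 0, 1] := by
  set c : AddCircle (2 * Real.pi) := ((2 * Real.pi * ω : ℝ) : AddCircle (2 * Real.pi))
  have hd θ : v₁ θ ^ 2 + v₂ θ ^ 2 ≠ 0 := sq_add_sq_ne_zero (hnz θ)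
  set B : AddCircle (2 * Real.pi) → Matrix (Fin 2) (Fin 2) ℝ :=
    fun θ => (Zmat v₁ v₂ (θ + c))⁻¹ * A θ * Zmat v₁ v₂ θ
  have hZ : Continuous (Zmat v₁ v₂) := continuous_Zmat hv₁ hv₂ hd
  have hB : Continuous B :=
    (((hZ.comp (continuous_add_const c)).matrix_inv_of_det_eq_one
      fun θ => det_Zmat (hd (θ + c))).mul hA).mul hZ
  refine ⟨fun θ => det_Zmat (hd θ), fun θ => B θ 0 1, hB.matrix_elem 0 1, fun θ => ?_⟩
  refine Matrix.eq_unipotent_of_det_eq_one_of_mulVec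
    (Matrix.det_inv_mul_mul_eq_one (A θ).2 (det_Zmat (hd θ)) (det_Zmat (hd (θ + c))))
    (Matrix.inv_mul_mul_mulVec_eq_self (by simp [det_Zmat (hd (θ + c))]) ?_)
  rw [Zmat_mulVec_vec2_one_zero, Zmat_mulVec_vec2_one_zero, Matrix.mulVec_vec2,
    ← (hsec θ).1, ← (hsec θ).2]

/-- A non-vanishing continuous invariant section of a continuous
SL(2,ℝ)-cocycle over the rotation by 2πω yields a continuous conjugation Z to an
upper triangular unipotent cocycle. -/
theorem invariant_section_triangularizes (ω : ℝ) (hω : Irrational ω)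
    (A : AddCircle (2 * Real.pi) → Matrix.SpecialLinearGroup (Fin 2) ℝ)
    (hA : Continuous fun θ => (A θ : Matrix (Fin 2) (Fin 2) ℝ))
    (v₁ v₂ : AddCircle (2 * Real.pi) → ℝ) (hv₁ : Continuous v₁) (hv₂ : Continuous v₂)
    (hnz : ∀ θ, (v₁ θ, v₂ θ) ≠ (0, 0))
    (hsec : ∀ θ : AddCircle (2 * Real.pi),
      v₁ (θ + ((2 * Real.pi * ω : ℝ) : AddCircle (2 * Real.pi)))
          = (A θ : Matrix (Fin 2) (Fin 2) ℝ) 0 0 * v₁ θ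
            + (A θ : Matrix (Fin 2) (Fin 2) ℝ) 0 1 * v₂ θ ∧
      v₂ (θ + ((2 * Real.pi * ω : ℝ) : AddCircle (2 * Real.pi)))
          = (A θ : Matrix (Fin 2) (Fin 2) ℝ) 1 0 * v₁ θ
            + (A θ : Matrix (Fin 2) (Fin 2) ℝ) 1 1 * v₂ θ) :
    (∀ θ, (Zmat v₁ v₂ θ).det = 1) ∧
    ∃ b₁₂ : AddCircle (2 * Real.pi) → ℝ, Continuous b₁₂ ∧
      ∀ θ : AddCircle (2 * Real.pi),
        (Zmat v₁ v₂ (θ + ((2 * Real.pi * ω : ℝ) : AddCircle (2 * Real.pi))))⁻¹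
            * (A θ : Matrix (Fin 2) (Fin 2) ℝ) * Zmat v₁ v₂ θ
          = !![1, b₁₂ θ; 0, 1] :=
  invariant_section_triangularizes_general ω A hA v₁ v₂ hv₁ hv₂ hnz hsec
end

section
/- If ω is Diophantine (|sin(2πnω)| > c/|n|^r for all n ≠ 0, with c > 0, r > 1) and f : ℝ/2πℤ → ℝ is real analytic with zero mean, then there exists a real analytic y : ℝ/2πℤ → ℝ solving the cohomological equation y(θ + 2πω) − y(θ) = f(θ) for all θ. -/
/-!
A real-analytic periodic function satisfies uniform Cauchy estimates `‖f⁽ᵏ⁾‖ ≤ C k! Rᵏ`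
(power-series bounds near each point, then compactness and periodicity). Integrating by parts
`k` times and choosing `k ≈ |n| / R` shows that its Fourier coefficients `aₙ` decay
exponentially. The Diophantine condition bounds the small divisors `e^{2πinω} - 1` below by
`c / |n|ʳ`, so `bₙ = aₙ / (e^{2πinω} - 1)` still decays exponentially, and the zero mean makes
`a₀ = 0`. Hence `∑ bₙ e^{inz}` converges on a complex strip around the real axis: its real part on
`ℝ` is real analytic, and comparing coefficients shows that it solves the equation.
-/

open scoped Nat NNReal Interval
open Filter Asymptotics Real Function
open Complex (I)

section CauchyEstimates

open scoped ENNReal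

variable {𝕜 E F : Type*} [NontriviallyNormedField 𝕜] [NormedAddCommGroup E] [NormedSpace 𝕜 E]
  [NormedAddCommGroup F] [NormedSpace 𝕜 F]

theorem FormalMultilinearSeries.exists_nnnorm_changeOrigin_mul_pow_le
    (p : FormalMultilinearSeries 𝕜 E F) {r r' : ℝ≥0} (hr : (r + r' : ℝ≥0∞) < p.radius) :
    ∃ A : ℝ≥0, ∀ x : E, ‖x‖₊ ≤ r → ∀ k, ‖p.changeOrigin x k‖₊ * r' ^ k ≤ A := by
  have hsum := p.changeOriginSeries_summable_aux₁ hr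
  -- The full series over `(k, l, s)`, summable as `r + r' < p.radius`, bounds each `k`-fibre.
  refine ⟨∑' s : Σ k l : ℕ, { s : Finset (Fin (k + l)) // s.card = l },
    ‖p (s.1 + s.2.1)‖₊ * r ^ s.2.1 * r' ^ s.1, fun x hx k => ?_⟩
  have hr₀ : (r : ℝ≥0∞) < p.radius := le_self_add.trans_lt hr
  have hx' : (‖x‖₊ : ℝ≥0∞) < p.radius := (ENNReal.coe_le_coe.2 hx).trans_lt hr₀
  calc ‖p.changeOrigin x k‖₊ * r' ^ k
      ≤ (∑' s : Σ l : ℕ, { s : Finset (Fin (k + l)) // s.card = l },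
          ‖p (k + s.1)‖₊ * r ^ s.1) * r' ^ k := by
        gcongr
        have hsum₂ := p.changeOriginSeries_summable_aux₂ hr₀ k
        exact (p.nnnorm_changeOrigin_le k hx').trans
          ((NNReal.summable_of_le (fun s => by gcongr) hsum₂).tsum_le_tsum (fun s => by gcongr)
            hsum₂)
    _ = ∑' s : Σ l : ℕ, { s : Finset (Fin (k + l)) // s.card = l },
          ‖p (k + s.1)‖₊ * r ^ s.1 * r' ^ k := (NNReal.tsum_mul_right _ _).symm
    _ ≤ _ := by
        rw [hsum.tsum_sigma' fun k => (NNReal.summable_sigma.1 hsum).1 k]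
        exact (NNReal.summable_sigma.1 hsum).2.le_tsum k fun _ _ => zero_le

theorem AnalyticAt.exists_norm_iteratedDeriv_le [CompleteSpace F] {f : 𝕜 → F} {x : 𝕜}
    (hf : AnalyticAt 𝕜 f x) :
    ∃ ε > 0, ∃ C R : ℝ≥0, 0 < R ∧
      ∀ k, ∀ y ∈ Metric.ball x ε, ‖iteratedDeriv k f y‖ ≤ C * k ! * R ^ k := by
  obtain ⟨p, ρ, hp⟩ := hf
  obtain ⟨r, hr₀, hr⟩ : ∃ r : ℝ≥0, 0 < r ∧ ((r + r : ℝ≥0) : ℝ≥0∞) < ρ := by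
    obtain ⟨r, hr₀, hr⟩ := ENNReal.lt_iff_exists_nnreal_btwn.1 hp.r_pos
    exact ⟨r / 2, by simpa using hr₀, by simpa using hr⟩
  obtain ⟨A, hA⟩ := p.exists_nnnorm_changeOrigin_mul_pow_le
    ((ENNReal.coe_add r r).symm.trans_lt hr |>.trans_le hp.r_le)
  refine ⟨r, hr₀, A, r⁻¹, inv_pos.2 hr₀, fun k y hy => ?_⟩
  have hz : ‖y - x‖₊ < r := by
    rwa [← NNReal.coe_lt_coe, coe_nnnorm, ← dist_eq_norm]
  have hq := hp.changeOrigin (y := y - x) ((ENNReal.coe_lt_coe.2 hz).trans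
    (le_self_add.trans_lt (by simpa using hr)))
  rw [add_sub_cancel] at hq
  have hqk : ‖p.changeOrigin (y - x) k‖ ≤ A * (r⁻¹ : ℝ≥0) ^ k := by
    have := hA _ hz.le k
    rw [← NNReal.coe_le_coe] at this
    push_cast at this ⊢
    rw [inv_pow, ← div_eq_mul_inv, le_div_iff₀ (by positivity)]
    exact this
  calc ‖iteratedDeriv k f y‖
      = ‖k ! • p.changeOrigin (y - x) k fun _ => 1‖ := by
        rw [iteratedDeriv_eq_iteratedFDeriv, hq.factorial_smul]
    _ ≤ k ! * ‖p.changeOrigin (y - x) k‖ := norm_nsmul_le.trans (by gcongr; simp)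
    _ ≤ k ! * (A * r⁻¹ ^ k) := by gcongr
    _ = A * k ! * r⁻¹ ^ k := by ring

theorem IsCompact.exists_norm_iteratedDeriv_le [CompleteSpace F] {f : 𝕜 → F} {K : Set 𝕜}
    (hK : IsCompact K) (hf : ∀ x ∈ K, AnalyticAt 𝕜 f x) :
    ∃ C R : ℝ≥0, 0 < R ∧ ∀ k, ∀ x ∈ K, ‖iteratedDeriv k f x‖ ≤ C * k ! * R ^ k := by
  refine hK.induction_on (p := fun s => ∃ C R : ℝ≥0, 0 < R ∧
    ∀ k, ∀ x ∈ s, ‖iteratedDeriv k f x‖ ≤ C * k ! * R ^ k) ⟨0, 1, one_pos, by simp⟩ ?_ ?_ ?_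
  · rintro s t hst ⟨C, R, hR, h⟩
    exact ⟨C, R, hR, fun k x hx => h k x (hst hx)⟩
  · rintro s t ⟨C₁, R₁, hR₁, h₁⟩ ⟨C₂, R₂, hR₂, h₂⟩
    refine ⟨max C₁ C₂, max R₁ R₂, lt_max_of_lt_left hR₁, ?_⟩
    rintro k x (hx | hx)
    · exact (h₁ k x hx).trans (by gcongr <;> simp)
    · exact (h₂ k x hx).trans (by gcongr <;> simp)
  · intro x hx
    obtain ⟨ε, hε, C, R, hR, h⟩ := (hf x hx).exists_norm_iteratedDeriv_le
    exact ⟨Metric.ball x ε, mem_nhdsWithin_of_mem_nhds (Metric.ball_mem_nhds x hε), C, R, hR, h⟩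

theorem Function.Periodic.iteratedDeriv {f : 𝕜 → F} {c : 𝕜} (h : Periodic f c) (k : ℕ) :
    Periodic (iteratedDeriv k f) c := by
  induction k with
  | zero => simpa
  | succ k ih =>
    intro x
    rw [iteratedDeriv_succ, ← deriv_comp_add_const, funext ih]

end CauchyEstimates

theorem Function.Periodic.exists_norm_iteratedDeriv_le {E : Type*} [NormedAddCommGroup E]
    [NormedSpace ℝ E] [CompleteSpace E] {f : ℝ → E} {T : ℝ} (hper : Periodic f T) (hT : 0 < T)
    (hf : ∀ x, AnalyticAt ℝ f x) :
    ∃ C R : ℝ≥0, 0 < R ∧ ∀ (k : ℕ) (x : ℝ), ‖_root_.iteratedDeriv k f x‖ ≤ C * k ! * R ^ k := by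
  obtain ⟨C, R, hR, h⟩ := (isCompact_Icc (a := 0) (b := T)).exists_norm_iteratedDeriv_le
    fun x _ => hf x
  refine ⟨C, R, hR, fun k x => ?_⟩
  obtain ⟨y, hy, hxy⟩ := (hper.iteratedDeriv k).exists_mem_Ico₀ hT x
  exact hxy ▸ h k y (Set.Ico_subset_Icc_self hy)

theorem le_two_mul_exp_of_forall_pow_mul_le {a C R x : ℝ} (ha : 0 ≤ a) (hR : 0 < R) (hx : 0 < x)
    (h : ∀ k : ℕ, x ^ k * a ≤ C * k ! * R ^ k) :
    a ≤ 2 * C * exp (-(log 2 / (2 * R)) * x) := by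
  -- For `k = ⌊x / 2R⌋`, `k! Rᵏ ≤ (k R)ᵏ ≤ (x / 2)ᵏ`.
  set k := ⌊x / (2 * R)⌋₊
  have hC : 0 ≤ C := by simpa using ha.trans (by simpa using h 0)
  have hkR : k * R ≤ x / 2 := by
    have := Nat.floor_le (div_nonneg hx.le (by positivity) : 0 ≤ x / (2 * R))
    rw [le_div_iff₀ (by positivity)] at this
    linarith
  have hhalf : a ≤ C * (1 / 2) ^ k := by
    refine le_of_mul_le_mul_left ?_ (pow_pos hx k)
    calc x ^ k * a ≤ C * k ! * R ^ k := h k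
      _ ≤ C * (k * R) ^ k := by
        rw [mul_pow, mul_assoc]
        gcongr
        exact_mod_cast Nat.factorial_le_pow k
      _ ≤ C * (x / 2) ^ k := by gcongr
      _ = x ^ k * (C * (1 / 2) ^ k) := by ring
  have hk : (1 / 2 : ℝ) ^ k ≤ 2 * exp (-(log 2 / (2 * R)) * x) := by
    have hlt : x / (2 * R) < k + 1 := Nat.lt_floor_add_one _
    have hlog : log 2 * (x / (2 * R)) ≤ log 2 * (k + 1) := by gcongr
    calc (1 / 2 : ℝ) ^ k = exp (-(k * log 2)) := by
          rw [← exp_log (by positivity : (0 : ℝ) < (1 / 2) ^ k), log_pow, one_div, log_inv,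
            mul_neg]
      _ ≤ exp (log 2 + -(log 2 / (2 * R)) * x) := by
          gcongr
          calc -(k * log 2) ≤ log 2 - log 2 * (x / (2 * R)) := by linarith
            _ = _ := by ring
      _ = 2 * exp (-(log 2 / (2 * R)) * x) := by rw [exp_add, exp_log two_pos]
  calc a ≤ C * (1 / 2) ^ k := hhalf
    _ ≤ C * (2 * exp (-(log 2 / (2 * R)) * x)) := by gcongr
    _ = _ := by ring

theorem tendsto_abs_intCast_cofinite_atTop : Tendsto (fun n : ℤ => |(n : ℝ)|) cofinite atTop :=
  tendsto_norm_cocompact_atTop.comp Int.tendsto_coe_cofinite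

theorem summable_exp_neg_mul_abs_intCast {δ : ℝ} (hδ : 0 < δ) :
    Summable fun n : ℤ => exp (-δ * |(n : ℝ)|) := by
  have h : Summable fun n : ℕ => exp (n * -δ) := summable_exp_nat_mul_iff.2 (neg_lt_zero.2 hδ)
  refine .of_nat_of_neg ?_ ?_ <;> simpa [mul_comm] using h

def ExpDecay {E : Type*} [Norm E] (a : ℤ → E) : Prop :=
  ∃ δ > 0, a =O[cofinite] fun n => exp (-δ * |(n : ℝ)|)

namespace ExpDecay

variable {E : Type*} [NormedAddCommGroup E] {a : ℤ → E}

theorem summable [CompleteSpace E] (ha : ExpDecay a) : Summable a :=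
  let ⟨_, hδ, h⟩ := ha
  summable_of_isBigO (summable_exp_neg_mul_abs_intCast hδ) h

theorem exists_summable_norm_mul_exp (ha : ExpDecay a) :
    ∃ σ > 0, Summable fun n => ‖a n‖ * exp (σ * |(n : ℝ)|) := by
  obtain ⟨δ, hδ, h⟩ := ha
  refine ⟨δ / 2, half_pos hδ,
    summable_of_isBigO (summable_exp_neg_mul_abs_intCast (half_pos hδ)) ?_⟩
  have := h.norm_left.mul (isBigO_refl (fun n : ℤ => exp (δ / 2 * |(n : ℝ)|)) cofinite)
  refine this.trans_eventuallyEq (.of_eq (funext fun n => ?_))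
  rw [← exp_add]
  ring_nf

theorem of_isBigO_rpow_mul {F : Type*} [Norm F] {b : ℤ → F} (ha : ExpDecay a) (r : ℝ)
    (hb : b =O[cofinite] fun n => |(n : ℝ)| ^ r * ‖a n‖) : ExpDecay b := by
  obtain ⟨δ, hδ, h⟩ := ha
  refine ⟨δ / 2, half_pos hδ, hb.trans ?_⟩
  have hpow := ((isLittleO_rpow_exp_pos_mul_atTop r (half_pos hδ)).comp_tendsto
    tendsto_abs_intCast_cofinite_atTop).isBigO
  refine (hpow.mul h.norm_left).trans_eventuallyEq (.of_eq (funext fun n => ?_))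
  simp only [comp_apply]
  rw [← exp_add]
  ring_nf

theorem div {𝕜 : Type*} [NormedField 𝕜] {a d : ℤ → 𝕜} (ha : ExpDecay a) {c r : ℝ} (hc : 0 < c)
    (hd : ∀ n : ℤ, n ≠ 0 → c / |(n : ℝ)| ^ r ≤ ‖d n‖) : ExpDecay fun n => a n / d n := by
  refine ha.of_isBigO_rpow_mul r (IsBigO.of_bound c⁻¹ ?_)
  filter_upwards [(Set.finite_singleton (0 : ℤ)).compl_mem_cofinite] with n (hn : n ≠ 0)
  have hpow : (0 : ℝ) < |(n : ℝ)| ^ r := by positivity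
  have hdn : 0 < ‖d n‖ := (div_pos hc hpow).trans_le (hd n hn)
  rw [norm_div, div_le_iff₀ hdn, Real.norm_of_nonneg (by positivity)]
  calc ‖a n‖ = c⁻¹ * (|(n : ℝ)| ^ r * ‖a n‖) * (c / |(n : ℝ)| ^ r) := by field_simp
    _ ≤ _ := by gcongr; exact hd n hn

theorem of_forall_pow_mul_le {C R L : ℝ} (hR : 0 < R) (hL : 0 < L)
    (h : ∀ n : ℤ, n ≠ 0 → ∀ k : ℕ, (L * |(n : ℝ)|) ^ k * ‖a n‖ ≤ C * k ! * R ^ k) :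
    ExpDecay a := by
  refine ⟨log 2 / (2 * R) * L, by positivity, IsBigO.of_bound (2 * C) ?_⟩
  filter_upwards [(Set.finite_singleton (0 : ℤ)).compl_mem_cofinite] with n (hn : n ≠ 0)
  rw [Real.norm_of_nonneg (exp_pos _).le]
  calc ‖a n‖ ≤ 2 * C * exp (-(log 2 / (2 * R)) * (L * |(n : ℝ)|)) :=
        le_two_mul_exp_of_forall_pow_mul_le (norm_nonneg _) hR (by positivity) (h n hn)
    _ = _ := by ring_nf

end ExpDecay

theorem fourierCoeffOn_of_hasDerivAt_of_eq {a b : ℝ} (hab : a < b) {F F' : ℝ → ℂ} {n : ℤ}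
    (hn : n ≠ 0) (hF : ∀ x ∈ [[a, b]], HasDerivAt F (F' x) x)
    (hF' : IntervalIntegrable F' MeasureTheory.volume a b) (hFab : F a = F b) :
    fourierCoeffOn hab F' n = 2 * π * I * n / (b - a) * fourierCoeffOn hab F n := by
  rw [fourierCoeffOn_of_hasDerivAt hab hn hF hF', hFab, sub_self, mul_zero, zero_sub]
  have : (b - a : ℂ) ≠ 0 := by exact_mod_cast (sub_pos.2 hab).ne'
  field_simp

open scoped ContDiff in
theorem fourierCoeffOn_iteratedDeriv {a b : ℝ} (hab : a < b) {F : ℝ → ℂ} (hF : ContDiff ℝ ∞ F)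
    (hper : Periodic F (b - a)) {n : ℤ} (hn : n ≠ 0) (k : ℕ) :
    fourierCoeffOn hab (iteratedDeriv k F) n =
      (2 * π * I * n / (b - a)) ^ k * fourierCoeffOn hab F n := by
  induction k with
  | zero => simp
  | succ k ih =>
    rw [pow_succ', mul_assoc, ← ih, iteratedDeriv_succ]
    refine fourierCoeffOn_of_hasDerivAt_of_eq hab hn (fun x _ => ?_) ?_ ?_
    · exact (hF.differentiable_iteratedDeriv k (mod_cast ENat.natCast_lt_top k) x).hasDerivAt
    · rw [← iteratedDeriv_succ]
      exact (hF.continuous_iteratedDeriv _ (mod_cast le_top)).intervalIntegrable _ _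
    · simpa using (hper.iteratedDeriv k a).symm

theorem norm_fourierCoeffOn_le {E : Type*} [NormedAddCommGroup E] [NormedSpace ℂ E] {a b : ℝ}
    (hab : a < b) {F : ℝ → E} {M : ℝ} (hF : ∀ x ∈ Set.Ioc a b, ‖F x‖ ≤ M) (n : ℤ) :
    ‖fourierCoeffOn hab F n‖ ≤ M := by
  rw [fourierCoeffOn_eq_integral, norm_smul]
  have hba : 0 < b - a := sub_pos.2 hab
  calc ‖(1 / (b - a) : ℝ)‖ * ‖∫ x in a..b, fourier (-n) (x : AddCircle (b - a)) • F x‖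
      ≤ (1 / (b - a)) * (M * |b - a|) := by
        gcongr
        · simp [abs_of_pos hba]
        · refine intervalIntegral.norm_integral_le_of_norm_le_const fun x hx => ?_
          rw [Set.uIoc_of_le hab.le] at hx
          rw [norm_smul, fourier_apply, Circle.norm_coe, one_mul]
          exact hF x hx
    _ = M := by rw [abs_of_pos hba]; field_simp

open scoped ContDiff in
theorem Function.Periodic.expDecay_fourierCoeffOn {a b : ℝ} (hab : a < b) {F : ℝ → ℂ}
    (hper : Periodic F (b - a)) (hF : ∀ x, AnalyticAt ℝ F x) :
    ExpDecay (fourierCoeffOn hab F) := by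
  have hba : 0 < b - a := sub_pos.2 hab
  obtain ⟨C, R, hR, hCR⟩ := hper.exists_norm_iteratedDeriv_le hba hF
  have hsmooth : ContDiff ℝ ∞ F := AnalyticOnNhd.contDiff fun x _ => hF x
  refine ExpDecay.of_forall_pow_mul_le (C := C) hR (L := 2 * π / (b - a)) (by positivity)
    fun n hn k => ?_
  calc (2 * π / (b - a) * |(n : ℝ)|) ^ k * ‖fourierCoeffOn hab F n‖
      = ‖fourierCoeffOn hab (_root_.iteratedDeriv k F) n‖ := by
        rw [fourierCoeffOn_iteratedDeriv hab hsmooth hper hn k, norm_mul, norm_pow]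
        congr 2
        rw [← Complex.ofReal_sub, norm_div, Complex.norm_real, Real.norm_of_nonneg hba.le]
        simp [abs_of_pos pi_pos]
        ring
    _ ≤ C * k ! * R ^ k := norm_fourierCoeffOn_le hab (fun x _ => hCR k x) n

theorem Function.Periodic.lift_eq_liftIoc {β : Type*} {T : ℝ} [Fact (0 < T)] {F : ℝ → β}
    (hper : Periodic F T) (a : ℝ) : hper.lift = AddCircle.liftIoc T a F := by
  ext x
  obtain ⟨y, hy, rfl⟩ : ∃ y ∈ Set.Ioc a (a + T), (y : AddCircle T) = x :=
    ⟨_, (AddCircle.equivIoc T a x).2, AddCircle.coe_equivIoc⟩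
  rw [AddCircle.liftIoc_coe_apply hy]
  rfl

theorem Function.Periodic.expDecay_fourierCoeff_lift {T : ℝ} [Fact (0 < T)] {F : ℝ → ℂ}
    (hper : Periodic F T) (hF : ∀ x, AnalyticAt ℝ F x) : ExpDecay (fourierCoeff hper.lift) := by
  rw [hper.lift_eq_liftIoc 0, funext (fourierCoeff_liftIoc_eq F)]
  exact expDecay_fourierCoeffOn _ (by simpa using hper) hF

theorem ExpDecay.analyticAt_tsum_mul_fourier {T : ℝ} [Fact (0 < T)] {b : ℤ → ℂ}
    (hb : ExpDecay b) (x : ℝ) :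
    AnalyticAt ℝ (fun x : ℝ => ∑' n, b n * fourier n (x : AddCircle T)) x := by
  have hT : 0 < T := Fact.out
  obtain ⟨σ, hσ, hsum⟩ := hb.exists_summable_norm_mul_exp
  set U : Set ℂ := {z | |z.im| < σ * T / (2 * π)}
  have hU : IsOpen U := isOpen_lt (continuous_abs.comp Complex.continuous_im) continuous_const
  have hG : DifferentiableOn ℂ
      (fun z : ℂ => ∑' n : ℤ, b n * Complex.exp (2 * π * I * n * z / T)) U := by
    refine Complex.differentiableOn_tsum_of_summable_norm hsum (fun n => by fun_prop) hU
      fun n z hz => ?_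
    rw [norm_mul, Complex.norm_exp, Complex.div_ofReal_re]
    gcongr
    have hz : |z.im| * (2 * π) ≤ σ * T := (lt_div_iff₀ (by positivity)).1 hz |>.le
    calc (2 * π * I * n * z).re / T = -(2 * π * n * z.im) / T := by simp
      _ ≤ |(n : ℝ)| * (|z.im| * (2 * π)) / T := by
        gcongr
        calc -(2 * π * n * z.im) ≤ |2 * π * n * z.im| := neg_le_abs _
          _ = _ := by rw [abs_mul, abs_mul, abs_of_pos two_pi_pos]; ring
      _ ≤ |(n : ℝ)| * (σ * T) / T := by gcongr
      _ = σ * |(n : ℝ)| := by field_simp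
  have hxU : (x : ℂ) ∈ U := by simp [U]; positivity
  simpa [comp_def, fourier_coe_apply] using
    (hG.analyticAt (hU.mem_nhds hxU)).restrictScalars.comp (Complex.ofRealCLM.analyticAt x)

theorem tsum_mul_fourier_add_sub_eq {T : ℝ} [Fact (0 < T)] {g : C(AddCircle T, ℂ)}
    (hg : Summable (fourierCoeff g)) {b : ℤ → ℂ} (hb : Summable b) {s : AddCircle T}
    (hbs : ∀ n, b n * (fourier n s - 1) = fourierCoeff g n) (x : AddCircle T) :
    ∑' n, b n * fourier n (x + s) - ∑' n, b n * fourier n x = g x := by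
  have hsum (y : AddCircle T) : Summable fun n => b n * fourier n y :=
    .of_norm (by simpa [fourier_apply, Circle.norm_coe] using hb.norm)
  rw [← (hsum _).tsum_sub (hsum _), ← (has_pointwise_sum_fourier_series_of_summable hg x).tsum_eq]
  congr 1 with n
  rw [← hbs, fourier_apply, smul_add, AddCircle.toCircle_add, Circle.coe_mul, ← fourier_apply,
    ← fourier_apply, smul_eq_mul]
  ring

theorem abs_sin_le_norm_fourier_sub_one {T : ℝ} (hT : T ≠ 0) (n : ℤ) (ω : ℝ) :
    |sin (2 * π * n * ω)| ≤ ‖fourier n ((T * ω : ℝ) : AddCircle T) - 1‖ := by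
  have hT' : (T : ℂ) ≠ 0 := by exact_mod_cast hT
  have h : fourier n ((T * ω : ℝ) : AddCircle T) = Complex.exp ((2 * π * n * ω : ℝ) * I) := by
    rw [fourier_coe_apply]
    push_cast
    congr 1
    field_simp
  calc |sin (2 * π * n * ω)| = |(Complex.exp ((2 * π * n * ω : ℝ) * I) - 1).im| := by
        rw [Complex.sub_im, Complex.exp_ofReal_mul_I_im, Complex.one_im, sub_zero]
    _ ≤ _ := h ▸ Complex.abs_im_le_norm _

theorem cohomological_equation_solvable_diophantine_general (ω : ℝ)
    (c r : ℝ) (hc : 0 < c)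
    (hdio : ∀ n : ℤ, n ≠ 0 → c / |n| ^ r < |Real.sin (2 * Real.pi * n * ω)|)
    (f : ℝ → ℝ) (hf : ∀ θ : ℝ, AnalyticAt ℝ f θ)
    (hper : Function.Periodic f (2 * Real.pi))
    (hmean : ∫ θ in (0 : ℝ)..(2 * Real.pi), f θ = 0) :
    ∃ y : ℝ → ℝ, (∀ θ : ℝ, AnalyticAt ℝ y θ) ∧ Function.Periodic y (2 * Real.pi) ∧
      ∀ θ : ℝ, y (θ + 2 * Real.pi * ω) - y θ = f θ := by
  have : Fact (0 < 2 * π) := ⟨two_pi_pos⟩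
  have hFper : Periodic (fun θ => (f θ : ℂ)) (2 * π) := fun θ => by simp [hper θ]
  let g : C(AddCircle (2 * π), ℂ) := ⟨hFper.lift,
    (Complex.continuous_ofReal.comp (AnalyticOnNhd.continuous fun θ _ => hf θ)).quotient_lift _⟩
  set a := fourierCoeff g
  have ha : ExpDecay a :=
    hFper.expDecay_fourierCoeff_lift fun θ => Complex.ofRealCLM.analyticAt _ |>.comp (hf θ)
  have ha₀ : a 0 = 0 := by
    have hint : ∫ θ in (0 : ℝ)..2 * π, g θ = ((∫ θ in (0 : ℝ)..2 * π, f θ : ℝ) : ℂ) :=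
      intervalIntegral.integral_ofReal
    simp [a, fourierCoeff_eq_intervalIntegral _ 0 0, hint, hmean]
  set e : ℤ → ℂ := fun n => fourier n ((2 * π * ω : ℝ) : AddCircle (2 * π))
  have he (n : ℤ) (hn : n ≠ 0) : c / |(n : ℝ)| ^ r ≤ ‖e n - 1‖ := by
    rw [← Int.cast_abs]
    exact (hdio n hn).le.trans (abs_sin_le_norm_fourier_sub_one two_pi_pos.ne' n ω)
  have hab (n : ℤ) : a n / (e n - 1) * (e n - 1) = a n := by
    rcases eq_or_ne n 0 with rfl | hn
    -- `e 0 = 1`: here the quotient is the junk value `a 0 / 0 = 0`, and `a 0 = 0` saves it.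
    · simp [ha₀]
    · exact div_mul_cancel₀ _ (norm_pos_iff.1 ((div_pos hc (by positivity)).trans_le (he n hn)))
  have hb : ExpDecay fun n => a n / (e n - 1) := ha.div hc he
  refine ⟨fun θ => (∑' n, a n / (e n - 1) * fourier n (θ : AddCircle (2 * π))).re,
    fun θ => Complex.reCLM.analyticAt _ |>.comp (hb.analyticAt_tsum_mul_fourier θ),
    fun θ => by simp only [AddCircle.coe_add_period], fun θ => ?_⟩
  rw [← Complex.sub_re, AddCircle.coe_add, tsum_mul_fourier_add_sub_eq ha.summable hb.summable hab]
  rfl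

/-- For Diophantine ω, the cohomological equation over the rotation
by 2πω with real analytic, zero-mean, 2π-periodic right-hand side has a real
analytic, 2π-periodic solution. -/
theorem cohomological_equation_solvable_diophantine (ω : ℝ)
    (c r : ℝ) (hc : 0 < c) (hr : 1 < r)
    (hdio : ∀ n : ℤ, n ≠ 0 → c / |n| ^ r < |Real.sin (2 * Real.pi * n * ω)|)
    (f : ℝ → ℝ) (hf : ∀ θ : ℝ, AnalyticAt ℝ f θ)
    (hper : Function.Periodic f (2 * Real.pi))
    (hmean : ∫ θ in (0 : ℝ)..(2 * Real.pi), f θ = 0) :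
    ∃ y : ℝ → ℝ, (∀ θ : ℝ, AnalyticAt ℝ y θ) ∧ Function.Periodic y (2 * Real.pi) ∧
      ∀ θ : ℝ, y (θ + 2 * Real.pi * ω) - y θ = f θ :=
  cohomological_equation_solvable_diophantine_general ω c r hc hdio f hf hper hmean
end
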